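/- For every integer i ≥ 0, the following binomial identity holds: ∑_{l=0}^{i} (−1)^l · C(2i+3, i−l) · C(2i+4+l, l+2) = (2i+2) · ∑_{l=0}^{i} (−1)^l · (2l+3) · C(2i+3, i−l), where C(n,k) denotes the binomial coefficient. -/

import Mathlib

/-!
The numbers `(-1)^l * C(m+l, l)` are the coefficients of `(1+x)^(-(m+1))`, so comparing
coefficients of `x^k` in `(1+x)^(-(m+1)) * (1+x)^(m+1+a) = (1+x)^a` gives
`∑_l (-1)^l C(m+l, l) C(m+1+a, k-l) = C(a, k)`; this is Chu–Vandermonde for `Ring.choose` on `ℤ`.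
With `a = 0` and `k = i+2` the left-hand side of the theorem becomes two boundary terms,
`(2i+3) C(2i+3, i+1) - C(2i+3, i+2) = (2i+2) C(2i+3, i+1)`. Splitting the weight
`2l+3 = 2 C(l+1, l) + C(l, l)` evaluates the sum on the right as `2 C(2i+1, i) + C(2i+2, i)`,
which is `C(2i+3, i+1)` by Pascal's rule.
-/

open Finset

theorem Ring.choose_neg_natCast_add_one (m l : ℕ) :
    Ring.choose (-((m + 1 : ℕ) : ℤ)) l = (-1) ^ l * ((m + l).choose l : ℤ) := by
  rw [Ring.choose_neg, Units.smul_def, Int.coe_negOnePow_natCast, smul_eq_mul,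
    show ((m + 1 : ℕ) : ℤ) + l - 1 = ((m + l : ℕ) : ℤ) by push_cast; ring, Ring.choose_natCast]

theorem sum_range_neg_one_pow_mul_add_choose_mul_choose (m a k : ℕ) :
    ∑ l ∈ range (k + 1), (-1) ^ l * ((m + l).choose l : ℤ) * ((m + 1 + a).choose (k - l) : ℤ) =
      a.choose k := by
  have hsplit : (a : ℤ) = -((m + 1 : ℕ) : ℤ) + ((m + 1 + a : ℕ) : ℤ) := by push_cast; ring
  rw [← Ring.choose_natCast, hsplit, Ring.add_choose_eq _ (Commute.all _ _),
    Nat.sum_antidiagonal_eq_sum_range_succ (fun i j => Ring.choose (-((m + 1 : ℕ) : ℤ)) i *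
      Ring.choose ((m + 1 + a : ℕ) : ℤ) j)]
  simp only [Ring.choose_neg_natCast_add_one, Ring.choose_natCast]

theorem sum_range_neg_one_pow_mul_choose_mul_choose_add_two (n i : ℕ) :
    ∑ l ∈ range (i + 1),
        (-1) ^ l * ((n + 1).choose (i - l) : ℤ) * ((n + 2 + l).choose (l + 2) : ℤ) =
      (n + 1) * (n + 1).choose (i + 1) - (n + 1).choose (i + 2) := by
  have h := sum_range_neg_one_pow_mul_add_choose_mul_choose n 0 (i + 2)
  rw [sum_range_succ', sum_range_succ', Nat.choose_eq_zero_of_lt (by omega : 0 < i + 2)] at h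
  have hshift : ∀ l ∈ range (i + 1),
      (-1) ^ (l + 1 + 1) * ((n + (l + 1 + 1)).choose (l + 1 + 1) : ℤ) *
        ((n + 1 + 0).choose (i + 2 - (l + 1 + 1)) : ℤ) =
      (-1) ^ l * ((n + 1).choose (i - l) : ℤ) * ((n + 2 + l).choose (l + 2) : ℤ) := by
    intro l _
    rw [show n + (l + 1 + 1) = n + 2 + l by ring, show i + 2 - (l + 1 + 1) = i - l by omega]
    ring
  rw [sum_congr rfl hshift] at h
  simp only [add_zero, zero_add, Nat.choose_zero_right, Nat.choose_one_right,
    Nat.add_one_sub_one, tsub_zero] at h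
  push_cast at h
  linear_combination h

theorem sum_range_neg_one_pow_mul_two_mul_add_three_mul_choose (n i : ℕ) :
    ∑ l ∈ range (i + 1), (-1) ^ l * (2 * l + 3) * ((n + 2).choose (i - l) : ℤ) =
      2 * n.choose i + (n + 1).choose i := by
  have hpairs := sum_range_neg_one_pow_mul_add_choose_mul_choose 1 n i
  have hsingles := sum_range_neg_one_pow_mul_add_choose_mul_choose 0 (n + 1) i
  rw [← hpairs, ← hsingles, mul_sum, ← sum_add_distrib]
  refine sum_congr rfl fun l _ => ?_
  rw [add_comm 1 l, Nat.choose_succ_self_right, zero_add, Nat.choose_self,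
    show 1 + 1 + n = n + 2 by ring, show 0 + 1 + (n + 1) = n + 2 by ring]
  push_cast
  ring

theorem Nat.choose_two_mul_add_three_add_one (i : ℕ) :
    (2 * i + 3).choose (i + 1) = 2 * (2 * i + 1).choose i + (2 * i + 2).choose i := by
  rw [Nat.choose_succ_succ', Nat.choose_succ_succ' (2 * i + 1), Nat.choose_symm_half]
  ring

/-- The binomial identity expressing `rank(H_{i,2}) = rank(G_{i,2})`, which makes
the Koszul locus `Z_{2i+3,i}` a virtual divisor on `M_{2i+3}`. -/
theorem koszul_rank_identity (i : ℕ) :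
    (∑ l ∈ Finset.range (i + 1),
        (-1 : ℤ) ^ l * (Nat.choose (2 * i + 3) (i - l)) *
          (Nat.choose (2 * i + 4 + l) (l + 2))) =
    (2 * i + 2) *
      ∑ l ∈ Finset.range (i + 1),
        (-1 : ℤ) ^ l * (2 * l + 3) * (Nat.choose (2 * i + 3) (i - l)) := by
  have hsymm : (2 * i + 3).choose (i + 2) = (2 * i + 3).choose (i + 1) :=
    Nat.choose_symm_of_eq_add (by ring)
  calc _ = (2 * i + 3 : ℤ) * (2 * i + 3).choose (i + 1) - (2 * i + 3).choose (i + 2) := by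
        exact_mod_cast sum_range_neg_one_pow_mul_choose_mul_choose_add_two (2 * i + 2) i
    _ = (2 * i + 2) * (2 * (2 * i + 1).choose i + (2 * i + 2).choose i) := by
        rw [hsymm, Nat.choose_two_mul_add_three_add_one]
        push_cast
        ring
    _ = _ := by rw [← sum_range_neg_one_pow_mul_two_mul_add_three_mul_choose]
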